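/- arXiv:1812.09491 — 2 statements merged into one kernel-verified Lean document; each statement's English description precedes it below -/
import Mathlib

section
/- Let L be a complete lattice satisfying the modular law. Then L satisfies condition (2) of strict modularity: for all b, c ∈ L and every subset A ⊆ L such that every element of L(A) is ≤ c, one has L(U(L(A) ∪ {b}) ∪ {c}) = L(U(L(A) ∪ L(b,c))). -/
/-!
In a complete lattice `L(S)` is the principal ideal `Iic (sInf S)` and `L(U(S))` is `Iic (sSup S)`.
With `a = sInf A` the two sides are therefore `Iic ((a ⊔ b) ⊓ c)` and `Iic (a ⊔ b ⊓ c)`, and the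
hypothesis says `a ≤ c`, which is exactly when the modular law identifies them.
-/

open Set

section CompleteLattice

variable {L : Type*} [CompleteLattice L]

lemma lowerBounds_eq_Iic_sInf (S : Set L) : lowerBounds S = Iic (sInf S) :=
  (isGLB_sInf S).lowerBounds_eq

lemma lowerBounds_upperBounds_eq_Iic_sSup (S : Set L) :
    lowerBounds (upperBounds S) = Iic (sSup S) := by
  rw [(isLUB_sSup S).upperBounds_eq, lowerBounds_Ici]

lemma lowerBounds_upperBounds_union_singleton (S : Set L) (c : L) :
    lowerBounds (upperBounds S ∪ {c}) = Iic (sSup S ⊓ c) := by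
  rw [lowerBounds_union, lowerBounds_upperBounds_eq_Iic_sSup, lowerBounds_singleton,
    Iic_inter_Iic]

end CompleteLattice

/-- A complete modular lattice satisfies condition (2) of strict
modularity. -/
theorem stmt_6 {L : Type*} [CompleteLattice L]
    (hmod : ∀ x y z : L, x ≤ z → (x ⊔ y) ⊓ z = x ⊔ (y ⊓ z)) :
    ∀ (b c : L) (A : Set L), (∀ w ∈ lowerBounds A, w ≤ c) →
      lowerBounds (upperBounds (lowerBounds A ∪ {b}) ∪ {c}) =
        lowerBounds (upperBounds (lowerBounds A ∪ lowerBounds {b, c})) := by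
  intro b c A hc
  have hA : sInf A ≤ c := hc _ (isGLB_sInf A).1
  rw [lowerBounds_upperBounds_union_singleton, lowerBounds_upperBounds_eq_Iic_sSup,
    lowerBounds_eq_Iic_sInf A, lowerBounds_eq_Iic_sInf {b, c}]
  simp only [sSup_union, csSup_Iic, sSup_singleton, sInf_pair]
  rw [hmod _ _ _ hA]
end

section
/- Let (P, ≤, ', ⊥, ⊤) be a bounded strictly modular poset with a complementation ' (i.e., U(x,x') = {⊤} and L(x,x') = {⊥} for all x). Define M(x,y) := L(U(x,y') ∪ {y}) and R(x,y) := L(U(L(x,y) ∪ {x'})). Then the operator divisibility identity M(R(x,y), x) = L(x,y) holds for all x, y ∈ P, where M(A, x) for a set A means L(U(A ∪ {x'}) ∪ {x}). -/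
/-!
Since `x' ∈ R(x,y)` and `U ∘ L ∘ U = U`, the set `M(R(x,y), x)` is `L(U(L(x,y) ∪ {x'}) ∪ {x})`.
The second modular law with `X = {x, y}` (all lower bounds of `X` lie below `x`) turns this into
`L(U(L(x,y) ∪ L(x',x)))`, and `L(x',x) = {⊥}` contributes nothing, leaving `L(U(L(x,y))) = L(x,y)`.
-/

open Set

section Bounds

variable {α : Type*} [Preorder α]

theorem upperBounds_lowerBounds_upperBounds (s : Set α) :
    upperBounds (lowerBounds (upperBounds s)) = upperBounds s :=
  gc_upperBounds_lowerBounds.l_u_l_eq_l s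

theorem lowerBounds_upperBounds_lowerBounds (s : Set α) :
    lowerBounds (upperBounds (lowerBounds s)) = lowerBounds s :=
  gc_upperBounds_lowerBounds.u_l_u_eq_u (OrderDual.toDual s)

theorem upperBounds_lowerBounds_upperBounds_union_singleton {s : Set α} {a : α} (ha : a ∈ s) :
    upperBounds (lowerBounds (upperBounds s) ∪ {a}) = upperBounds s := by
  rw [union_eq_self_of_subset_right
      (singleton_subset_iff.2 (subset_lowerBounds_upperBounds s ha)),
    upperBounds_lowerBounds_upperBounds]

theorem upperBounds_union_singleton_bot [OrderBot α] (s : Set α) :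
    upperBounds (s ∪ {⊥}) = upperBounds s := by
  simp

theorem lowerBounds_upperBounds_lowerBounds_union_of_modular [OrderBot α] {X : Set α} {x x' : α}
    (hmod : lowerBounds (upperBounds (lowerBounds X ∪ {x'}) ∪ {x}) =
      lowerBounds (upperBounds (lowerBounds X ∪ lowerBounds {x', x})))
    (hcompl : lowerBounds {x, x'} = {⊥}) :
    lowerBounds (upperBounds (lowerBounds X ∪ {x'}) ∪ {x}) = lowerBounds X := by
  rw [hmod, pair_comm, hcompl, upperBounds_union_singleton_bot,
    lowerBounds_upperBounds_lowerBounds]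

end Bounds

theorem stmt_10_general {P : Type*} [PartialOrder P] [BoundedOrder P] (n : P → P)
    (h2 : ∀ (y z : P) (X : Set P), (∀ w ∈ lowerBounds X, w ≤ z) →
      lowerBounds (upperBounds (lowerBounds X ∪ {y}) ∪ {z}) =
        lowerBounds (upperBounds (lowerBounds X ∪ lowerBounds {y, z})))
    (hL : ∀ x : P, lowerBounds {x, n x} = {⊥}) :
    ∀ x y : P,
      lowerBounds
        (upperBounds
          (lowerBounds (upperBounds (lowerBounds {x, y} ∪ {n x})) ∪ {n x}) ∪ {x}) =
        lowerBounds {x, y} := by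
  intro x y
  rw [upperBounds_lowerBounds_upperBounds_union_singleton
    (mem_union_right _ (mem_singleton (n x)))]
  exact lowerBounds_upperBounds_lowerBounds_union_of_modular
    (h2 (n x) x {x, y} fun _ hw => hw (mem_insert x {y})) (hL x)

/-- In a bounded strictly modular poset with complementation `n`,
with `R(x,y) := L(U(L(x,y) ∪ {n x}))` and `M(A,x) := L(U(A ∪ {n x}) ∪ {x})`,
the operator divisibility identity `M(R(x,y), x) = L(x,y)` holds. -/
theorem stmt_10 {P : Type*} [PartialOrder P] [BoundedOrder P] (n : P → P)
    (h1 : ∀ (x y : P) (Z : Set P), x ∈ lowerBounds Z →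
      lowerBounds (upperBounds {x, y} ∪ Z) =
        lowerBounds (upperBounds ({x} ∪ lowerBounds ({y} ∪ Z))))
    (h2 : ∀ (y z : P) (X : Set P), (∀ w ∈ lowerBounds X, w ≤ z) →
      lowerBounds (upperBounds (lowerBounds X ∪ {y}) ∪ {z}) =
        lowerBounds (upperBounds (lowerBounds X ∪ lowerBounds {y, z})))
    (hU : ∀ x : P, upperBounds {x, n x} = {⊤})
    (hL : ∀ x : P, lowerBounds {x, n x} = {⊥}) :
    ∀ x y : P,
      lowerBounds
        (upperBounds
          (lowerBounds (upperBounds (lowerBounds {x, y} ∪ {n x})) ∪ {n x}) ∪ {x}) =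
        lowerBounds {x, y} :=
  stmt_10_general n h2 hL
end
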